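/- Let α ∈ ℂ with Re α > 0 and Im α > 0. Then the function r ↦ Re φ(α,r) is strictly increasing on (0,∞). -/

import Mathlib

/-- `w α r = √(1 + α² sinh² r)` (principal branch). -/
noncomputable def w (α : ℂ) (r : ℝ) : ℂ :=
  (1 + α ^ 2 * (Real.sinh r : ℂ) ^ 2) ^ (1 / 2 : ℂ)

/-- `φ(α,r) = α log((α cosh r + w)/√(α²−1)) + (1/2) log((cosh r − w)/(cosh r + w))`
(principal branches). -/
noncomputable def phi (α : ℂ) (r : ℝ) : ℂ :=
  α * Complex.log ((α * (Real.cosh r : ℂ) + w α r) / ((α ^ 2 - 1) ^ (1 / 2 : ℂ))) +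
    (1 / 2 : ℂ) * Complex.log (((Real.cosh r : ℂ) - w α r) / ((Real.cosh r : ℂ) + w α r))

/-!
The two terms of `φ` have `r`-derivatives `α² sinh r / w` and `1 / (w sinh r)`, by
`w² = 1 + α² sinh² r` and `cosh² r = 1 + sinh² r`; hence `∂φ/∂r = w(α, r) / sinh r`.
For `α` in the open first quadrant and `r > 0`, the radicand `1 + α² sinh² r` lies in the upper
half-plane, so `w` lies in the open first quadrant too. This keeps the arguments of both
logarithms off `(-∞, 0]`, so the derivative formula holds, and it makes
`Re ∂φ/∂r = Re w / sinh r` positive.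
-/

open Complex

namespace Complex

lemma cpow_one_half_re_pos {z : ℂ} (hz : z ∈ slitPlane) : 0 < (z ^ (1 / 2 : ℂ)).re := by
  have hz₀ := slitPlane_ne_zero hz
  have hcos : 0 < Real.cos (arg z / 2) := Real.cos_pos_of_mem_Ioo
    ⟨by linarith [neg_pi_lt_arg z], by linarith [(arg_le_pi z).lt_of_ne (slitPlane_arg_ne_pi hz)]⟩
  rw [cpow_def_of_ne_zero hz₀, exp_re]
  simpa [log_im, div_eq_mul_inv] using mul_pos (Real.exp_pos _) hcos

lemma cpow_one_half_im_pos {z : ℂ} (hz : 0 < z.im) : 0 < (z ^ (1 / 2 : ℂ)).im := by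
  have hz₀ : z ≠ 0 := fun h => by simp [h] at hz
  have harg : 0 < arg z :=
    (arg_nonneg_iff.2 hz.le).lt_of_ne (fun h => hz.ne' (arg_eq_zero_iff.1 h.symm).2)
  have hsin : 0 < Real.sin (arg z / 2) :=
    Real.sin_pos_of_pos_of_lt_pi (by linarith) (by linarith [arg_le_pi z, Real.pi_pos])
  rw [cpow_def_of_ne_zero hz₀, exp_im]
  simpa [log_im, div_eq_mul_inv] using mul_pos (Real.exp_pos _) hsin

lemma div_re_pos {a b : ℂ} (ha : 0 < a.re) (ha' : 0 ≤ a.im) (hb : 0 < b.re) (hb' : 0 ≤ b.im) :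
    0 < (a / b).re := by
  have hb₀ : 0 < normSq b := normSq_pos.2 fun h => by simp [h] at hb
  rw [div_re, ← add_div]
  positivity

lemma im_ofReal_sub_div_ofReal_add_neg {c : ℝ} {z : ℂ} (hc : 0 < c) (hz : 0 < z.im) :
    ((c - z) / (c + z)).im < 0 := by
  have hN : 0 < normSq (c + z) := normSq_pos.2 fun h => by
    have := congrArg im h; simp at this; linarith
  rw [div_im, div_sub_div_same]
  apply div_neg_of_neg_of_pos _ hN
  simp only [sub_re, sub_im, add_re, add_im, ofReal_re, ofReal_im]
  nlinarith

lemma im_sq_pos {α : ℂ} (hre : 0 < α.re) (him : 0 < α.im) : 0 < (α ^ 2).im := by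
  rw [sq, mul_im]
  positivity

end Complex

lemma HasDerivAt.complex_re {f : ℝ → ℂ} {f' : ℂ} {x : ℝ} (h : HasDerivAt f f' x) :
    HasDerivAt (fun x => (f x).re) f'.re x :=
  reCLM.hasFDerivAt.comp_hasDerivAt x h

lemma w_sq (α : ℂ) (r : ℝ) : w α r ^ 2 = 1 + α ^ 2 * (Real.sinh r : ℂ) ^ 2 := by
  simp [w]

lemma w_re_pos {α : ℂ} {r : ℝ} (hz : 1 + α ^ 2 * (Real.sinh r : ℂ) ^ 2 ∈ slitPlane) :
    0 < (w α r).re :=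
  cpow_one_half_re_pos hz

lemma hasDerivAt_w {α : ℂ} {r : ℝ} (hz : 1 + α ^ 2 * (Real.sinh r : ℂ) ^ 2 ∈ slitPlane) :
    HasDerivAt (w α) (α ^ 2 * Real.sinh r * Real.cosh r / w α r) r := by
  have hsinh : HasDerivAt (fun t : ℝ => (Real.sinh t : ℂ)) (Real.cosh r) r :=
    (Real.hasDerivAt_sinh r).ofReal_comp
  have h := (hasStrictDerivAt_cpow_const (c := 1 / 2) hz).hasDerivAt.comp r
    (((hsinh.pow 2).const_mul (α ^ 2)).const_add 1)
  refine h.congr_deriv ?_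
  have hw : w α r ≠ 0 := fun h => by simpa [h] using w_re_pos hz
  rw [cpow_sub _ _ (slitPlane_ne_zero hz), cpow_one]
  change _ * (w α r / _) * _ = _
  rw [← w_sq]
  field_simp
  ring

lemma hasDerivAt_phi {α : ℂ} {r : ℝ} (hr : r ≠ 0)
    (hz : 1 + α ^ 2 * (Real.sinh r : ℂ) ^ 2 ∈ slitPlane)
    (h₁ : (α * Real.cosh r + w α r) / (α ^ 2 - 1) ^ (1 / 2 : ℂ) ∈ slitPlane)
    (h₂ : (Real.cosh r - w α r) / (Real.cosh r + w α r) ∈ slitPlane) :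
    HasDerivAt (phi α) (w α r / Real.sinh r) r := by
  set s : ℂ := (Real.sinh r : ℂ)
  set c : ℂ := (Real.cosh r : ℂ)
  set W := w α r
  set k := (α ^ 2 - 1) ^ (1 / 2 : ℂ)
  set W' := α ^ 2 * s * c / W
  have hs : s ≠ 0 := ofReal_ne_zero.2 (Real.sinh_ne_zero.2 hr)
  have hW : W ≠ 0 := fun h => by simpa [W, h] using w_re_pos hz
  have hWsq : W ^ 2 = 1 + α ^ 2 * s ^ 2 := w_sq α r
  have hW' : W' * W = α ^ 2 * s * c := div_mul_cancel₀ _ hW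
  have hcs : c ^ 2 = 1 + s ^ 2 := by
    simp only [c, s, ← ofReal_pow, ← ofReal_one, ← ofReal_add, Real.cosh_sq']
  have hc : HasDerivAt (fun t : ℝ => (Real.cosh t : ℂ)) s r := (Real.hasDerivAt_cosh r).ofReal_comp
  have hw : HasDerivAt (w α) W' r := hasDerivAt_w hz
  obtain ⟨hαcW, hk⟩ := div_ne_zero_iff.1 (slitPlane_ne_zero h₁)
  obtain ⟨hc_W, hcW⟩ := div_ne_zero_iff.1 (slitPlane_ne_zero h₂)
  have hL₁ := (((hc.const_mul α).add hw).div_const _).clog_real h₁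
  have hL₂ := ((hc.sub hw).div (hc.add hw) hcW).clog_real h₂
  refine ((hL₁.const_mul α).add (hL₂.const_mul (1 / 2))).congr_deriv ?_
  change α * ((α * s + W') / k / ((α * c + W) / k)) +
    1 / 2 * (((s - W') * (c + W) - (c - W) * (s + W')) / (c + W) ^ 2 / ((c - W) / (c + W))) = W / s
  have E₁ : α * ((α * s + W') / k / ((α * c + W) / k)) = α ^ 2 * s / W := by
    field_simp
    linear_combination α * hW'
  have E₂ : ((s - W') * (c + W) - (c - W) * (s + W')) / (c + W) ^ 2 / ((c - W) / (c + W))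
      = 2 / (s * W) := by
    field_simp
    linear_combination (2 * s ^ 2 + 2) * hWsq - (2 * α ^ 2 * s ^ 2 + 2) * hcs - 2 * s * c * hW'
  rw [E₁, E₂]
  field_simp
  linear_combination -hWsq

section FirstQuadrant

variable {α : ℂ} (hre : 0 < α.re) (him : 0 < α.im) {r : ℝ}
include hre him

lemma im_one_add_sq_mul_sinh_sq_pos (hr : r ≠ 0) :
    0 < (1 + α ^ 2 * (Real.sinh r : ℂ) ^ 2).im := by
  have hs : 0 < Real.sinh r ^ 2 := by positivity
  simpa only [← ofReal_pow, add_im, one_im, mul_im, ofReal_re, ofReal_im, mul_zero, zero_add]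
    using mul_pos (im_sq_pos hre him) hs

lemma hasDerivAt_phi_of_re_pos_of_im_pos (hr : 0 < r) :
    HasDerivAt (phi α) (w α r / Real.sinh r) r := by
  have hz := im_one_add_sq_mul_sinh_sq_pos hre him hr.ne'
  have hslit : 1 + α ^ 2 * (Real.sinh r : ℂ) ^ 2 ∈ slitPlane := mem_slitPlane_iff.2 (.inr hz.ne')
  have hk : 0 < (α ^ 2 - 1).im := by simpa using im_sq_pos hre him
  have hc : 0 < Real.cosh r := Real.cosh_pos r
  have hWre : 0 < (w α r).re := w_re_pos hslit
  have hWim : 0 < (w α r).im := cpow_one_half_im_pos hz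
  have hkre := cpow_one_half_re_pos (mem_slitPlane_iff.2 (.inr hk.ne'))
  have hkim := cpow_one_half_im_pos hk
  refine hasDerivAt_phi hr.ne' hslit (mem_slitPlane_iff.2 (.inl ?_))
    (mem_slitPlane_iff.2 (.inr (im_ofReal_sub_div_ofReal_add_neg hc hWim).ne))
  apply div_re_pos _ _ hkre hkim.le <;>
    simp only [add_re, add_im, mul_re, mul_im, ofReal_re, ofReal_im] <;> nlinarith

end FirstQuadrant

/-- For `Re α > 0`, `Im α > 0`, the function `r ↦ Re φ(α,r)` is strictly increasing
on `(0,∞)`. -/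
theorem re_phi_strictMonoOn (α : ℂ) (hre : 0 < α.re) (him : 0 < α.im) :
    StrictMonoOn (fun r : ℝ => (phi α r).re) (Set.Ioi 0) := by
  have hderiv (r : ℝ) (hr : 0 < r) :
      HasDerivAt (fun r => (phi α r).re) ((w α r).re / Real.sinh r) r := by
    rw [← div_ofReal_re]
    exact (hasDerivAt_phi_of_re_pos_of_im_pos hre him hr).complex_re
  have hpos (r : ℝ) (hr : 0 < r) : 0 < (w α r).re / Real.sinh r := by
    have hz := im_one_add_sq_mul_sinh_sq_pos hre him hr.ne'
    exact div_pos (w_re_pos (mem_slitPlane_iff.2 (.inr hz.ne'))) (Real.sinh_pos_iff.2 hr)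
  refine strictMonoOn_of_hasDerivWithinAt_pos (convex_Ioi 0)
    (f' := fun r => (w α r).re / Real.sinh r)
    (fun r hr => (hderiv r hr).continuousAt.continuousWithinAt) ?_ ?_
  all_goals rw [interior_Ioi]
  exacts [fun r hr => (hderiv r hr).hasDerivWithinAt, hpos]
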